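/- arXiv:math/0703541 — 4 statements merged into one kernel-verified Lean document; each statement's English description precedes it below -/
import Mathlib

section
/- Let p be a prime, k a field of characteristic p, C a finite group, and M a finitely generated kC-module that is projective. If c ∈ C is a p-singular element (its order is divisible by p), then the character (trace function) of M vanishes at c: Tr(c, M) = 0. -/
/-!
By Higman's criterion, projectivity writes the identity of `M` as a relative trace
`∑ g, ρ g * θ * ρ g⁻¹` of some `k`-linear `θ`: take a splitting of a free presentation of `M` and
insert the projection of `k[C]` onto its coefficient at `1`. Then
`Tr (ρ c) = ∑ g, Tr (ρ (g * c * g⁻¹) * θ)`, and the summand is constant on the cosets `g ⟨c⟩`,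
each of which has `orderOf c ≡ 0` elements in `k`.
-/

open Finset LinearMap MonoidAlgebra

theorem Subgroup.sum_eq_card_nsmul_sum_quotient_out {G : Type*} [Group G] [Fintype G]
    (H : Subgroup G) [Fintype (G ⧸ H)] {A : Type*} [AddCommMonoid A] (f : G → A)
    (hf : ∀ g, ∀ h ∈ H, f (g * h) = f g) :
    ∑ g, f g = Nat.card H • ∑ q : G ⧸ H, f q.out := by
  classical
  have hout (g : G) : f g = f (g : G ⧸ H).out := by
    have hmem : (g : G ⧸ H).out⁻¹ * g ∈ H := QuotientGroup.eq.mp (QuotientGroup.out_eq' _)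
    rw [← hf (g : G ⧸ H).out _ hmem, mul_inv_cancel_left]
  calc ∑ g, f g = ∑ x : (G ⧸ H) × H, f x.1.out :=
        Fintype.sum_equiv groupEquivQuotientProdSubgroup _ _ hout
    _ = ∑ q : G ⧸ H, Nat.card H • f q.out := by
        simp [Fintype.sum_prod_type, Nat.card_eq_fintype_card]
    _ = Nat.card H • ∑ q : G ⧸ H, f q.out := (smul_sum ..).symm

namespace MonoidAlgebra

variable {k G : Type*} [CommSemiring k] [Group G] [Fintype G]

theorem sum_of_mul_single_coeff_of_inv_mul (a : k[G]) :
    ∑ g, of k G g * single 1 ((of k G g⁻¹ * a).coeff 1) = a := by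
  simp only [of_apply, coeff_single_mul_apply, single_mul_single, inv_inv, mul_one, one_mul]
  conv_rhs => rw [← sum_coeff_single a]
  rw [Finsupp.sum_fintype _ _ (by simp)]

variable {N : Type*} [AddCommMonoid N] [Module k[G] N] [Module k N] [IsScalarTower k k[G] N]

theorem exists_sum_of_smul_of_inv_smul_eq_self [Module.Projective k[G] N] :
    ∃ θ : N →ₗ[k] N, ∀ x, ∑ g, of k G g • θ (of k G g⁻¹ • x) = x := by
  obtain ⟨s, hs⟩ := Module.projective_def'.mp ‹_›
  let π₁ : k[G] →ₗ[k] k[G] :=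
    lsingle 1 ∘ₗ Finsupp.lapply 1 ∘ₗ (coeffLinearEquiv k).toLinearMap
  have hπ₁ (a : k[G]) : π₁ a = single 1 (a.coeff 1) := rfl
  let πN := Finsupp.mapRange.linearMap (α := N) π₁
  have hπN (f : N →₀ k[G]) : ∑ g, of k G g • πN (of k G g⁻¹ • f) = f := by
    refine Finsupp.ext fun n => ?_
    simp only [Finsupp.finsetSum_apply, Finsupp.smul_apply, πN, Finsupp.mapRange.linearMap_apply,
      Finsupp.mapRange_apply, hπ₁, smul_eq_mul]
    exact sum_of_mul_single_coeff_of_inv_mul (f n)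
  let lc := Finsupp.linearCombination k[G] (id : N → N)
  refine ⟨lc.restrictScalars k ∘ₗ πN ∘ₗ s.restrictScalars k, fun x => ?_⟩
  calc ∑ g, of k G g • lc (πN (s (of k G g⁻¹ • x)))
      = lc (∑ g, of k G g • πN (of k G g⁻¹ • s x)) := by simp only [map_smul, map_sum]
    _ = x := by rw [hπN]; exact congr($hs x)

end MonoidAlgebra

namespace Representation

variable {k G V : Type*} [CommSemiring k] [Group G] [Fintype G] [AddCommMonoid V] [Module k V]
  (ρ : Representation k G V)

theorem exists_sum_conj_eq_one_of_projective (h : Module.Projective k[G] ρ.asModule) :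
    ∃ θ : Module.End k V, ∑ g, ρ g * θ * ρ g⁻¹ = 1 := by
  obtain ⟨θ, hθ⟩ := exists_sum_of_smul_of_inv_smul_eq_self (k := k) (G := G) (N := ρ.asModule)
  let e := ρ.asModuleEquiv
  have hρ (g : G) (x : ρ.asModule) : ρ g (e x) = e (of k G g • x) := by
    rw [asModuleEquiv_map_smul, asAlgebraHom_of]
  refine ⟨e.toLinearMap ∘ₗ θ ∘ₗ e.symm.toLinearMap, LinearMap.ext fun v => ?_⟩
  calc (∑ g, ρ g * (e.toLinearMap ∘ₗ θ ∘ₗ e.symm.toLinearMap) * ρ g⁻¹) v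
      = e (∑ g, of k G g • θ (of k G g⁻¹ • e.symm v)) := by
        simp only [LinearMap.sum_apply, Module.End.mul_apply, LinearMap.comp_apply,
          LinearEquiv.coe_coe, e, asModuleEquiv_symm_map_rho, hρ, map_sum]
    _ = v := by rw [hθ, e.apply_symm_apply]

theorem trace_mul_sum_conj (θ : Module.End k V) (c : G) :
    trace k V (ρ c * ∑ g, ρ g * θ * ρ g⁻¹) = ∑ g, trace k V (ρ (g * c * g⁻¹) * θ) := by
  rw [mul_sum, map_sum]
  refine Fintype.sum_equiv (Equiv.inv G) _ _ fun g => ?_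
  rw [Equiv.inv_apply, inv_inv, ← mul_assoc, trace_mul_comm, ← mul_assoc, ← mul_assoc,
    ← map_mul, ← map_mul]

theorem trace_mul_sum_conj_eq_zero (p : ℕ) [CharP k p] (θ : Module.End k V) {c : G}
    (hc : p ∣ orderOf c) : trace k V (ρ c * ∑ g, ρ g * θ * ρ g⁻¹) = 0 := by
  classical
  have hinv (g h : G) (hh : h ∈ Subgroup.zpowers c) :
      trace k V (ρ (g * h * c * (g * h)⁻¹) * θ) = trace k V (ρ (g * c * g⁻¹) * θ) := by
    obtain ⟨n, rfl⟩ := Subgroup.mem_zpowers_iff.mp hh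
    congr 3
    group
  rw [trace_mul_sum_conj, (Subgroup.zpowers c).sum_eq_card_nsmul_sum_quotient_out _ hinv,
    Nat.card_zpowers, nsmul_eq_mul, (CharP.cast_eq_zero_iff k p _).mpr hc, zero_mul]

end Representation

theorem trace_eq_zero_of_projective_of_p_singular_general
    (p : ℕ) (k : Type*) [Field k] [CharP k p]
    (C : Type*) [Group C] [Fintype C]
    (M : Type*) [AddCommGroup M] [Module k M]
    (ρ : Representation k C M)
    (hproj : Module.Projective (MonoidAlgebra k C) ρ.asModule)
    (c : C) (hc : p ∣ orderOf c) :
    LinearMap.trace k M (ρ c) = 0 := by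
  obtain ⟨θ, hθ⟩ := ρ.exists_sum_conj_eq_one_of_projective hproj
  simpa only [hθ, mul_one] using ρ.trace_mul_sum_conj_eq_zero p θ hc

/-- Green's theorem on zeros of characters: if `k` is a field of characteristic `p`, `C` a
finite group, and `M` a finite-dimensional `k`-vector space with a `C`-action (given by a
representation `ρ`) making it a projective `kC`-module, then the trace of the action of any
`p`-singular element `c` (an element of order divisible by `p`) vanishes. -/
theorem trace_eq_zero_of_projective_of_p_singular
    (p : ℕ) [Fact p.Prime] (k : Type*) [Field k] [CharP k p]
    (C : Type*) [Group C] [Fintype C]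
    (M : Type*) [AddCommGroup M] [Module k M] [FiniteDimensional k M]
    (ρ : Representation k C M)
    (hproj : Module.Projective (MonoidAlgebra k C) ρ.asModule)
    (c : C) (hc : p ∣ orderOf c) :
    LinearMap.trace k M (ρ c) = 0 :=
  trace_eq_zero_of_projective_of_p_singular_general p k C M ρ hproj c hc
end

section
/- Let G be a finite group and u a torsion unit of augmentation 1 in ℤG with u ≠ 1. Then ε_1(u) = 0, i.e., the coefficient of the identity element in u is zero. -/
open MonoidAlgebra Finset
open scoped Classical

/-- The partial augmentation of `u ∈ ℤG` at `x ∈ G`: the sum of the coefficients of `u`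
over the conjugacy class of `x`. -/
noncomputable def partialAug {G : Type*} [Group G] [Fintype G]
    (x : G) (u : MonoidAlgebra ℤ G) : ℤ :=
  ∑ g : G, if IsConj x g then u.coeff g else 0

/-- The augmentation of `u = Σ a_g g` is `Σ a_g`. -/
noncomputable def augment {G : Type*} [Group G] [Fintype G] (u : MonoidAlgebra ℤ G) : ℤ :=
  ∑ g : G, u.coeff g

/-! Let `L` be left multiplication by `u` on `ℂG`. It has finite order, so it is diagonalisable
with eigenvalues `ζ_i` on the unit circle, and its trace is `|G| a` for `a = ε_1(u)`. Then
`Σ |ζ_i - a|² = |G| (1 - a²)`, so a nonzero integer `a` forces every `ζ_i = a`, i.e. `L = a`.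
Evaluating at `1` gives `u = a`, and augmentation one gives `u = 1`. -/

lemma Complex.norm_sub_ofReal_sq_of_norm_eq_one {z : ℂ} (hz : ‖z‖ = 1) (a : ℝ) :
    ‖z - a‖ ^ 2 = 1 + a ^ 2 - 2 * a * z.re := by
  have h : z.re ^ 2 + z.im ^ 2 = 1 := by
    rw [sq, sq, ← Complex.normSq_apply, Complex.normSq_eq_norm_sq, hz, one_pow]
  rw [Complex.sq_norm, Complex.normSq_apply]
  simp only [Complex.sub_re, Complex.sub_im, Complex.ofReal_re, Complex.ofReal_im]
  linear_combination h

lemma Multiset.sum_map_norm_sub_ofReal_sq {s : Multiset ℂ} (hs : ∀ z ∈ s, ‖z‖ = 1) (a : ℝ) :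
    (s.map fun z : ℂ => ‖z - a‖ ^ 2).sum = s.card * (1 + a ^ 2) - 2 * a * s.sum.re := by
  induction s using Multiset.induction_on with
  | empty => simp
  | cons z s ih =>
    rw [Multiset.map_cons, Multiset.sum_cons, Multiset.card_cons, Multiset.sum_cons,
      Complex.add_re, Complex.norm_sub_ofReal_sq_of_norm_eq_one (hs z (mem_cons_self z s)),
      ih fun w hw => hs w (mem_cons_of_mem hw)]
    push_cast
    ring

lemma Multiset.eq_of_norm_eq_one_of_sum_eq_card_mul_int {s : Multiset ℂ}
    (hs : ∀ z ∈ s, ‖z‖ = 1) {a : ℤ} (ha : a ≠ 0) (hsum : s.sum = s.card * a) {z : ℂ}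
    (hz : z ∈ s) : z = a := by
  have hdev : (s.map fun w : ℂ => ‖w - (a : ℝ)‖ ^ 2).sum ≤ 0 := by
    have ha2 : (1 : ℝ) ≤ (a : ℝ) ^ 2 := by
      exact_mod_cast (one_le_sq_iff_one_le_abs a).mpr (Int.one_le_abs ha)
    have hre : s.sum.re = s.card * a := by simp [hsum]
    rw [sum_map_norm_sub_ofReal_sq hs, hre]
    nlinarith
  have hz_dev : ‖z - (a : ℝ)‖ ^ 2 ≤ 0 :=
    (single_le_sum (forall_mem_map_iff.mpr fun w _ => sq_nonneg _) _
      (mem_map_of_mem (fun w : ℂ => ‖w - (a : ℝ)‖ ^ 2) hz)).trans hdev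
  simpa [sub_eq_zero] using le_antisymm hz_dev (sq_nonneg _)

namespace Module.End

section Field

variable {K V : Type*} [Field K] [AddCommGroup V] [Module K V] {f : End K V}

lemma HasEigenvalue.pow_eq_one {n : ℕ} {μ : K} (hμ : f.HasEigenvalue μ) (hf : f ^ n = 1) :
    μ ^ n = 1 := by
  obtain ⟨v, hv⟩ := hμ.exists_hasEigenvector
  have h := hv.pow_apply n
  rw [hf, one_apply] at h
  exact smul_left_injective K hv.2 (h.symm.trans (one_smul K v).symm)

open Polynomial in
lemma isSemisimple_of_isOfFinOrder [CharZero K] (hf : IsOfFinOrder f) : f.IsSemisimple := by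
  obtain ⟨n, hn, hfn⟩ := hf.exists_pow_eq_one
  refine isSemisimple_of_squarefree_aeval_eq_zero (p := X ^ n - C 1) ?_ (by simp [hfn])
  exact (separable_X_pow_sub_C 1 (Nat.cast_ne_zero.mpr hn.ne') one_ne_zero).squarefree

lemma IsSemisimple.eq_algebraMap_of_forall_hasEigenvalue [IsAlgClosed K] [FiniteDimensional K V]
    (hf : f.IsSemisimple) {a : K} (h : ∀ μ, f.HasEigenvalue μ → μ = a) :
    f = algebraMap K (End K V) a := by
  have htop : f.eigenspace a = ⊤ := by
    refine eq_top_iff.mpr (hf.iSup_eigenspace_eq_top.symm.le.trans (iSup_le fun μ => ?_))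
    by_cases hμ : μ = a
    · rw [hμ]
    · exact (not_not.mp (mt (h μ) hμ) : f.eigenspace μ = ⊥).le.trans bot_le
  ext v
  simpa using mem_eigenspace_iff.mp (htop.ge (Submodule.mem_top (x := v)))

end Field

variable {V : Type*} [AddCommGroup V] [Module ℂ V] [FiniteDimensional ℂ V] {g : End ℂ V}

lemma eq_algebraMap_of_isOfFinOrder_of_trace_eq (hg : IsOfFinOrder g) {a : ℤ} (ha : a ≠ 0)
    (htr : LinearMap.trace ℂ V g = finrank ℂ V * a) : g = algebraMap ℂ (End ℂ V) a := by
  obtain ⟨n, hn, hgn⟩ := hg.exists_pow_eq_one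
  have hsplits : g.charpoly.Splits := IsAlgClosed.splits _
  have hroots : ∀ μ, μ ∈ g.charpoly.roots ↔ g.HasEigenvalue μ := fun μ => by
    rw [Polynomial.mem_roots g.charpoly_monic.ne_zero, hasEigenvalue_iff_isRoot_charpoly]
  have hcard : g.charpoly.roots.card = finrank ℂ V := by
    rw [← hsplits.natDegree_eq_card_roots, LinearMap.charpoly_natDegree]
  have hunit : ∀ μ ∈ g.charpoly.roots, ‖μ‖ = 1 := fun μ hμ =>
    Complex.norm_eq_one_of_pow_eq_one (((hroots μ).mp hμ).pow_eq_one hgn) hn.ne'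
  have hsum : g.charpoly.roots.sum = g.charpoly.roots.card * a := by
    rw [← trace_eq_sum_roots_charpoly_of_splits hsplits, htr, hcard]
  exact (isSemisimple_of_isOfFinOrder hg).eq_algebraMap_of_forall_hasEigenvalue fun μ hμ =>
    Multiset.eq_of_norm_eq_one_of_sum_eq_card_mul_int hunit ha hsum ((hroots μ).mpr hμ)

end Module.End

namespace MonoidAlgebra

lemma finrank_eq_card (k G : Type*) [CommRing k] [Nontrivial k] [Monoid G] [Fintype G] :
    Module.finrank k (MonoidAlgebra k G) = Fintype.card G :=
  Module.finrank_eq_card_basis (MonoidAlgebra.basis G k)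

variable {G : Type*} [Group G] [Fintype G]

lemma trace_mulLeft {k : Type*} [CommRing k] (x : MonoidAlgebra k G) :
    LinearMap.trace k (MonoidAlgebra k G) (LinearMap.mulLeft k x) = Fintype.card G * x.coeff 1 := by
  rw [LinearMap.trace_eq_matrix_trace k (MonoidAlgebra.basis G k), Matrix.trace]
  simp [Algebra.leftMulMatrix_eq_repr_mul, MonoidAlgebra.basis, coeff_mul_single_apply]

lemma eq_intCast_coeff_one_of_isOfFinOrder {x : MonoidAlgebra ℤ G} (hx : IsOfFinOrder x)
    (h1 : x.coeff 1 ≠ 0) : x = (x.coeff 1 : MonoidAlgebra ℤ G) := by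
  set φ := mapRingHom G (Int.castRingHom ℂ)
  have hφ : Function.Injective φ := map_injective _ Int.cast_injective
  have hfin : IsOfFinOrder (LinearMap.mulLeft ℂ (φ x)) :=
    ((Algebra.lmul ℂ (MonoidAlgebra ℂ G)).toMonoidHom.comp φ.toMonoidHom).isOfFinOrder hx
  have htr : LinearMap.trace ℂ _ (LinearMap.mulLeft ℂ (φ x)) =
      Module.finrank ℂ (MonoidAlgebra ℂ G) * (x.coeff 1 : ℤ) := by
    rw [trace_mulLeft, finrank_eq_card, coeff_mapRingHom, eq_intCast]
  have hscalar := congr($(Module.End.eq_algebraMap_of_isOfFinOrder_of_trace_eq hfin h1 htr) 1)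
  apply hφ
  simpa [Algebra.algebraMap_eq_smul_one] using hscalar

end MonoidAlgebra

/-- Berman–Higman: a nontrivial torsion unit of augmentation one in `ℤG` has zero
coefficient at the identity. -/
theorem coeff_one_eq_zero_of_torsion_unit {G : Type*} [Group G] [Fintype G]
    (u : (MonoidAlgebra ℤ G)ˣ) (htor : IsOfFinOrder u)
    (haug : augment (u : MonoidAlgebra ℤ G) = 1) (hne : u ≠ 1) :
    (u : MonoidAlgebra ℤ G).coeff 1 = 0 := by
  by_contra h1
  have hu := eq_intCast_coeff_one_of_isOfFinOrder (Units.isOfFinOrder_val.mpr htor) h1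
  have ha : (u : MonoidAlgebra ℤ G).coeff 1 = 1 := by
    rw [← haug, augment, hu]
    simp [intCast_def, coeff_single]
  exact hne (Units.ext (by rw [hu, ha, Int.cast_one, Units.val_one]))
end

section
/- Let G be a finite abelian group and u a torsion unit in ℤG of augmentation 1. Then u is an element of G (i.e., u = g for some g ∈ G); in particular the order of u equals the order of some element of G. -/
/-!
Evaluating `u = Σ a_g g` at a complex character `ψ` of `G` is a ring homomorphism, so `ψ(u)` is a
root of unity and has absolute value `1`. Parseval's identity for the characters of `G` turns
`Σ_ψ |ψ(u)|² = |G|` into `Σ_g a_g² = 1`. The `a_g` being integers, exactly one of them is nonzero,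
and augmentation one forces it to be `1`.
-/

open MonoidAlgebra Finset
open scoped Classical

namespace AddChar

variable {α : Type*} [AddCommGroup α] [Fintype α]

open ComplexConjugate in
theorem sum_normSq_sum_mul_apply (a : α → ℂ) :
    ∑ ψ : AddChar α ℂ, Complex.normSq (∑ x, a x * ψ x) =
      Fintype.card α * ∑ x, Complex.normSq (a x) := by
  apply Complex.ofReal_injective
  push_cast
  simp only [← Complex.mul_conj, map_sum, map_mul, sum_mul_sum]
  calc ∑ ψ : AddChar α ℂ, ∑ x, ∑ y, a x * ψ x * (conj (a y) * conj (ψ y))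
      = ∑ x, ∑ y, a x * conj (a y) * ∑ ψ : AddChar α ℂ, ψ (x - y) := by
        rw [sum_comm]; refine sum_congr rfl fun x _ => ?_
        rw [sum_comm]; refine sum_congr rfl fun y _ => ?_
        rw [Finset.mul_sum]; refine sum_congr rfl fun ψ _ => ?_
        rw [← map_neg_eq_conj, sub_eq_add_neg, map_add_eq_mul]; ring
    _ = _ := by
        simp only [sum_apply_eq_ite, sub_eq_zero, mul_ite, mul_zero, sum_ite_eq, mem_univ,
          if_true, Finset.mul_sum]
        exact sum_congr rfl fun x _ => mul_comm _ _

end AddChar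

theorem Int.exists_eq_piSingle_of_sum_sq_eq_one_of_sum_eq_one {ι : Type*} [Fintype ι]
    {f : ι → ℤ} (hsq : ∑ i, f i ^ 2 = 1) (hsum : ∑ i, f i = 1) : ∃ i, f = Pi.single i 1 := by
  obtain ⟨i, -, hi⟩ := exists_ne_zero_of_sum_ne_zero (hsq.symm ▸ one_ne_zero)
  have hsingle : f = Pi.single i (f i) := by
    refine funext fun j => ?_
    by_cases hji : j = i
    · subst hji; simp
    rw [Pi.single_eq_of_ne hji]
    by_contra hj
    have hpair := sum_le_sum_of_subset_of_nonneg (subset_univ {i, j})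
      fun k _ _ => sq_nonneg (f k)
    rw [sum_pair (Ne.symm hji), hsq] at hpair
    have := lt_of_le_of_ne (sq_nonneg (f i)) hi.symm
    have := sq_pos_of_ne_zero hj
    omega
  rw [hsingle, Fintype.sum_pi_single'] at hsum
  exact ⟨i, hsum ▸ hsingle⟩

namespace MonoidAlgebra

theorem lift_apply_eq_sum {R A M : Type*} [CommSemiring R] [Semiring A] [Algebra R A] [Monoid M]
    [Fintype M] (F : M →* A) (v : MonoidAlgebra R M) :
    lift R A M F v = ∑ m, algebraMap R A (v.coeff m) * F m :=
  (lift_apply' F v).trans <| Finsupp.sum_fintype _ _ fun _ => by rw [map_zero, zero_mul]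

variable {G : Type*} [CommGroup G] [Fintype G]

theorem sum_sq_coeff_eq_one_of_isOfFinOrder {u : (MonoidAlgebra ℤ G)ˣ} (hu : IsOfFinOrder u) :
    ∑ g, (u : MonoidAlgebra ℤ G).coeff g ^ 2 = 1 := by
  -- The characters of `G` are taken as additive characters of `Additive G`, whose orthogonality
  -- relations are in Mathlib.
  set a : Additive G → ℂ := fun x => (u : MonoidAlgebra ℤ G).coeff x.toMul
  have hchar (ψ : AddChar (Additive G) ℂ) : Complex.normSq (∑ x, a x * ψ x) = 1 := by
    have hnorm : ‖lift ℤ ℂ G ψ.toMonoidHom u‖ = 1 :=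
      ((lift ℤ ℂ G ψ.toMonoidHom).toMonoidHom.comp (Units.coeHom _)).isOfFinOrder hu
        |>.norm_eq_one
    rw [Complex.normSq_eq_norm_sq, ← one_pow 2, ← hnorm,
      lift_apply_eq_sum (M := G) ψ.toMonoidHom, ← Additive.ofMul.sum_comp]
    rfl
  have parseval := AddChar.sum_normSq_sum_mul_apply a
  simp only [hchar, sum_const, card_univ, AddChar.card_eq, nsmul_eq_mul, mul_one, a,
    Complex.normSq_intCast, ← sq] at parseval
  have hcard : (Fintype.card (Additive G) : ℝ) ≠ 0 := Nat.cast_ne_zero.2 Fintype.card_ne_zero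
  have h := (mul_eq_left₀ hcard).1 parseval.symm
  rw [← Additive.ofMul.sum_comp] at h
  exact_mod_cast h

end MonoidAlgebra

/-- Higman: every torsion unit of augmentation one in the integral group ring of a finite
abelian group is trivial, i.e. is a group element. -/
theorem torsion_unit_trivial_of_abelian {G : Type*} [CommGroup G] [Fintype G]
    (u : (MonoidAlgebra ℤ G)ˣ) (htor : IsOfFinOrder u)
    (haug : augment (u : MonoidAlgebra ℤ G) = 1) :
    ∃ g : G, (u : MonoidAlgebra ℤ G) = MonoidAlgebra.of ℤ G g := by
  obtain ⟨g, hg⟩ := Int.exists_eq_piSingle_of_sum_sq_eq_one_of_sum_eq_one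
    (sum_sq_coeff_eq_one_of_isOfFinOrder htor) haug
  refine ⟨g, MonoidAlgebra.ext (Finsupp.ext fun h => ?_)⟩
  rw [hg, of_apply, coeff_single, Finsupp.single_apply, Pi.single_apply]
  exact if_congr eq_comm rfl rfl
end

section
/- Let G be a finite solvable group, p a prime, N a nontrivial normal p-subgroup of G, and u a torsion unit of augmentation 1 in ℤG. Suppose that the image ū of u in ℤ(G/N) has the same order as u, that there is x ∈ G with the image x̄ of the same order as ū and ε_{x̄}(ū) ≠ 0, and that ε_g(u) = 0 for every g ∈ G whose order is strictly greater than the order of u. Then there exists g ∈ G of the same order as u with ε_g(u) ≠ 0. -/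
/-!
Pushing `u` forward along `G → G/N` makes `ε_{x̄}(ū)` the sum of the coefficients of `u` over the
preimage of the class of `x̄`. This preimage is a union of conjugacy classes of `G`, so one of them,
say that of `g`, has `ε_g(u) ≠ 0`. The order of `g` is at least that of its image, which is
conjugate to `x̄` and so has order `o(u)`; it is at most `o(u)` since `ε_g(u)` vanishes at
larger orders.
-/

open MonoidAlgebra Finset
open scoped Classical

lemma IsConj.orderOf_eq {G : Type*} [Group G] {a b : G} (h : IsConj a b) :
    orderOf a = orderOf b :=
  let ⟨_, hc⟩ := h
  hc.orderOf_eq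

lemma MonoidAlgebra.coeff_mapDomain_eq_sum {R M N : Type*} [Semiring R] [Fintype M]
    [DecidableEq N] (f : M → N) (u : MonoidAlgebra R M) (n : N) :
    (mapDomain f u).coeff n = ∑ m ∈ univ.filter (fun m => f m = n), u.coeff m := by
  rw [mapDomain, coeff_ofCoeff, Finsupp.mapDomain, Finsupp.sum_apply, Finsupp.sum, sum_filter]
  simp only [Finsupp.single_apply]
  exact sum_subset (subset_univ _) fun m _ hm => by simp [Finsupp.notMem_support_iff.1 hm]

section PartialAugmentation

variable {G : Type*} [Group G] [Fintype G]

lemma partialAug_eq_sum_filter (x : G) (u : MonoidAlgebra ℤ G) :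
    partialAug x u = ∑ g ∈ univ.filter (IsConj x), u.coeff g := by
  rw [partialAug, sum_filter]

lemma exists_partialAug_ne_zero_of_sum_ne_zero {S : G → Prop} [DecidablePred S]
    (hS : ∀ g h, IsConj g h → S g → S h) (u : MonoidAlgebra ℤ G)
    (hsum : ∑ g ∈ univ.filter S, u.coeff g ≠ 0) :
    ∃ g, S g ∧ partialAug g u ≠ 0 := by
  contrapose! hsum
  rw [← sum_fiberwise_of_maps_to (t := (univ.filter S).image ConjClasses.mk)
    (fun g hg => mem_image_of_mem _ hg)]
  refine sum_eq_zero fun c hc => ?_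
  obtain ⟨g₀, hg₀, rfl⟩ := mem_image.1 hc
  have hS₀ : S g₀ := (mem_filter.1 hg₀).2
  have hclass : (univ.filter S).filter (fun g => ConjClasses.mk g = ConjClasses.mk g₀) =
      univ.filter (IsConj g₀) := by
    ext g
    simp only [mem_filter, mem_univ, true_and, ConjClasses.mk_eq_mk_iff_isConj, isConj_comm]
    exact ⟨And.right, fun h => ⟨hS g₀ g h hS₀, h⟩⟩
  rw [hclass, ← partialAug_eq_sum_filter]
  exact hsum g₀ hS₀

lemma partialAug_mapDomain {H : Type*} [Group H] [Fintype H] [DecidableEq H] (f : G →* H)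
    (x : G) (u : MonoidAlgebra ℤ G) :
    partialAug (f x) (mapDomain f u) =
      ∑ g ∈ univ.filter (fun g => IsConj (f x) (f g)), u.coeff g := by
  simp only [partialAug, coeff_mapDomain_eq_sum, sum_filter, ite_sum_zero]
  rw [sum_comm]
  refine sum_congr rfl fun g _ => ?_
  rw [Fintype.sum_eq_single (f g) fun h hh => by simp [Ne.symm hh]]
  simp

end PartialAugmentation

theorem inductive_step_case_one_general {G : Type*} [Group G] [Fintype G]
    (N : Subgroup G) [N.Normal]
    (u : (MonoidAlgebra ℤ G)ˣ)
    (ubar : (MonoidAlgebra ℤ (G ⧸ N))ˣ)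
    (hubar : ubar =
      Units.map (MonoidAlgebra.mapDomainRingHom ℤ (QuotientGroup.mk' N)).toMonoidHom u)
    (horder : orderOf ubar = orderOf u)
    (x : G) (hx : orderOf (QuotientGroup.mk' N x) = orderOf ubar)
    (hxaug : partialAug (QuotientGroup.mk' N x) (ubar : MonoidAlgebra ℤ (G ⧸ N)) ≠ 0)
    (hgreater : ∀ g : G, orderOf u < orderOf g → partialAug g (u : MonoidAlgebra ℤ G) = 0) :
    ∃ g : G, orderOf g = orderOf u ∧ partialAug g (u : MonoidAlgebra ℤ G) ≠ 0 := by
  set π := QuotientGroup.mk' N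
  have hubar_coe : (ubar : MonoidAlgebra ℤ (G ⧸ N)) = mapDomain π u := by rw [hubar]; rfl
  rw [hubar_coe, partialAug_mapDomain] at hxaug
  obtain ⟨g, hconj, hg⟩ := exists_partialAug_ne_zero_of_sum_ne_zero
    (S := fun g => IsConj (π x) (π g)) (fun _ _ h hS => hS.trans (π.map_isConj h)) _ hxaug
  have hle : orderOf g ≤ orderOf u := not_lt.1 (mt (hgreater g) hg)
  have hge : orderOf u ≤ orderOf g :=
    calc orderOf u = orderOf (π g) := by rw [← hconj.orderOf_eq, hx, horder]
      _ ≤ orderOf g := Nat.le_of_dvd (orderOf_pos g) (orderOf_map_dvd π g)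
  exact ⟨g, le_antisymm hle hge, hg⟩

/-- First case of the inductive step of the main theorem: `N` is a nontrivial normal
`p`-subgroup of the finite solvable group `G`, the image `ū` of the torsion unit `u` in
`ℤ(G/N)` has the same order as `u` and has a nonzero partial augmentation at a class of the
same order, and partial augmentations of `u` vanish at elements of strictly greater order.
Then `u` has a nonzero partial augmentation at an element of the same order. -/
theorem inductive_step_case_one {G : Type*} [Group G] [Fintype G] [Group.IsSolvable G]
    (p : ℕ) [Fact p.Prime] (N : Subgroup G) [N.Normal] (hNbot : N ≠ ⊥) (hN : IsPGroup p N)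
    (u : (MonoidAlgebra ℤ G)ˣ) (htor : IsOfFinOrder u)
    (haug : augment (u : MonoidAlgebra ℤ G) = 1)
    (ubar : (MonoidAlgebra ℤ (G ⧸ N))ˣ)
    (hubar : ubar =
      Units.map (MonoidAlgebra.mapDomainRingHom ℤ (QuotientGroup.mk' N)).toMonoidHom u)
    (horder : orderOf ubar = orderOf u)
    (x : G) (hx : orderOf (QuotientGroup.mk' N x) = orderOf ubar)
    (hxaug : partialAug (QuotientGroup.mk' N x) (ubar : MonoidAlgebra ℤ (G ⧸ N)) ≠ 0)
    (hgreater : ∀ g : G, orderOf u < orderOf g → partialAug g (u : MonoidAlgebra ℤ G) = 0) :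
    ∃ g : G, orderOf g = orderOf u ∧ partialAug g (u : MonoidAlgebra ℤ G) ≠ 0 :=
  inductive_step_case_one_general N u ubar hubar horder x hx hxaug hgreater
end
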